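/- Let M = {v_1^{m_1}, ..., v_ℓ^{m_ℓ}} with distinct ranks v_1 < ... < v_ℓ, n = Σ m_i, n_i = m_1 + ... + m_i. If there exists a code C_L ⊆ (Z_q)^{n−m_1} with q > n_{ℓ−1} whose minimum Lee distance is d, then there exists a code C_K ⊆ S(M) with minimum Kendall τ-distance at least d and of size |C_K| = |C_L ∩ [Z]^M|. -/

import Mathlib

/-- `AdjTrans σ π` : the sequence `π` is obtained from the sequence `σ` by exchanging
two distinct adjacent elements (an adjacent transposition). -/
def AdjTrans (σ π : List ℤ) : Prop :=
  ∃ (l₁ l₂ : List ℤ) (a b : ℤ), a ≠ b ∧ σ = l₁ ++ a :: b :: l₂ ∧ π = l₁ ++ b :: a :: l₂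

/-- `StepsTo n σ π` : `π` can be obtained from `σ` by a sequence of `n` adjacent
transpositions. -/
def StepsTo : ℕ → List ℤ → List ℤ → Prop
  | 0 => fun σ π => σ = π
  | n + 1 => fun σ π => ∃ τ, AdjTrans σ τ ∧ StepsTo n τ π

/-- The Kendall τ-distance between two sequences: the minimum number of adjacent
transpositions needed to transform one into the other. -/
noncomputable def dK (σ π : List ℤ) : ℕ := sInf {n | StepsTo n σ π}

/-- The list `[a, a+1, ..., a+len-1]` of integers. -/
def rangeList (a len : ℕ) : List ℤ := (List.range' a len).map (fun x => (x : ℤ))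

/-- The substitution map `T_θ`: the `r`-th occurrence (from the left, `0`-indexed) of a
rank `a` in `σ` is replaced by the `r`-th entry of the list `θ a`. -/
def Tmap (θ : ℤ → List ℤ) (σ : List ℤ) : List ℤ :=
  (List.range σ.length).map (fun j =>
    (θ (σ.getD j 0)).getD ((σ.take j).count (σ.getD j 0)) 0)

/-- `psiEntry σ a s` : the number of positions in `σ` strictly to the right of the `s`-th
occurrence (`0`-indexed) of `a` in `σ` that hold an element smaller than `a`. -/
def psiEntry (σ : List ℤ) (a : ℤ) (s : ℕ) : ℕ :=
  (σ.drop (((σ.indexesOf a).getD s σ.length) + 1)).countP (fun x => decide (x < a))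

/-- The Manhattan distance between two vectors of naturals (presented as lists). -/
def manhattanL (x y : List ℕ) : ℕ :=
  ∑ i ∈ Finset.range (max x.length y.length), ((x.getD i 0 : ℤ) - (y.getD i 0 : ℤ)).natAbs

/-- The Lee distance over `Z_q` between two vectors with entries in `{0, …, q-1}`
(presented as lists). -/
def leeDistL (q : ℕ) (x y : List ℕ) : ℕ :=
  ∑ i ∈ Finset.range (max x.length y.length),
    min (((x.getD i 0 : ℤ) - (y.getD i 0 : ℤ)).natAbs)
      (q - ((x.getD i 0 : ℤ) - (y.getD i 0 : ℤ)).natAbs)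

/-- The Lee distance between two vectors over `ZMod q`. -/
def zmodLee {q N : ℕ} (x y : Fin N → ZMod q) : ℕ :=
  ∑ i, min (x i - y i).val (y i - x i).val

/-- `permList k σ` : `σ` is (an ordering representing) a permutation of `{1, …, k}`. -/
def permList (k : ℕ) (σ : List ℤ) : Prop :=
  (↑σ : Multiset ℤ) = (↑(rangeList 1 k) : Multiset ℤ)

/-- The multiset `M_{k,r} = {0^k, k+1, …, k+r}`. -/
def Mkr (k r : ℕ) : Multiset ℤ :=
  Multiset.replicate k (0 : ℤ) + (↑(rangeList (k + 1) r) : Multiset ℤ)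

/-- `α_{↓k}` : delete from `α` all elements larger than `k`. -/
def restrictTo (k : ℕ) (α : List ℤ) : List ℤ :=
  α.filter (fun x => decide (x ≤ (k : ℤ)))

/-- `α_{k↦0}` : replace in `α` every element of `{1, …, k}` by `0`. -/
def mapToZero (k : ℕ) (α : List ℤ) : List ℤ :=
  α.map (fun x => if 1 ≤ x ∧ x ≤ (k : ℤ) then 0 else x)

/-- `star σ ρ = σ ∗ ρ` : replace the zeros of `ρ`, from left to right, by the elements
of `σ` in order. -/
def starP : List ℤ → List ℤ → List ℤ
  | _, [] => []
  | σ, x :: ρ' => if x = 0 then σ.headD 0 :: starP σ.tail ρ' else x :: starP σ ρ'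

/-!
The map `ψ` sends a multi-permutation to the list of its per-occurrence inversion counts.
An adjacent transposition of `a ≠ b` changes exactly one of these counts, that of the
occurrence of `max a b` involved, and by one; hence the `ℓ¹`-distance of `ψ`-images, and a
fortiori their Lee distance, is at most the Kendall τ-distance. Conversely, every vector of
`[Z]^M` is a `ψ`-image: inserting the copies of each rank, in increasing order of the ranks,
at the prescribed distances from the right end inverts `ψ`, since later (larger) ranks do not
affect the counts of earlier ones. The preimage of `C_L ∩ [Z]^M` is the required code.
-/

/-- `psiBlock a σ = [psiEntry σ a 0, psiEntry σ a 1, …]`, the block of `ψ σ` belonging to the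
rank `a`. -/
def psiBlock (a : ℤ) : List ℤ → List ℕ
  | [] => []
  | x :: t => if x = a then t.countP (· < a) :: psiBlock a t else psiBlock a t

def psiVec (vs σ : List ℤ) : List ℕ := (vs.map (psiBlock · σ)).flatten

/-- Inverts `psiBlock a`: the `k`-th inserted copy of `a` gets exactly `e[k]` entries of `σ` to
its right, provided `e` is non-increasing and bounded by `σ.length`. -/
def insertBlock (a : ℤ) : List ℕ → List ℤ → List ℤ
  | [], σ => σ
  | e :: es, σ => σ.take (σ.length - e) ++ a :: insertBlock a es (σ.drop (σ.length - e))

def unpsi (v : ℕ → ℤ) (B : ℕ → List ℕ) : ℕ → List ℤ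
  | 0 => []
  | i + 1 => insertBlock (v i) (B i) (unpsi v B i)

section Manhattan

@[simp] lemma manhattanL_nil : manhattanL [] [] = 0 := rfl

lemma manhattanL_cons (x y : ℕ) (u w : List ℕ) :
    manhattanL (x :: u) (y :: w) = ((x : ℤ) - y).natAbs + manhattanL u w := by
  unfold manhattanL
  rw [List.length_cons, List.length_cons, Nat.succ_max_succ, Finset.sum_range_succ', add_comm]
  simp

lemma manhattanL_append {u₁ w₁ : List ℕ} (h : u₁.length = w₁.length) (u₂ w₂ : List ℕ) :
    manhattanL (u₁ ++ u₂) (w₁ ++ w₂) = manhattanL u₁ w₁ + manhattanL u₂ w₂ := by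
  induction u₁ generalizing w₁ with
  | nil => simp [List.eq_nil_of_length_eq_zero h.symm]
  | cons x u ih =>
    obtain _ | ⟨y, w⟩ := w₁
    · simp at h
    · simp [manhattanL_cons, ih (Nat.succ_inj.1 h), add_assoc]

@[simp] lemma manhattanL_self (u : List ℕ) : manhattanL u u = 0 := by
  simp [manhattanL]

lemma manhattanL_eq_sum_range {x y : List ℕ} {N : ℕ} (hx : x.length ≤ N) (hy : y.length ≤ N) :
    manhattanL x y = ∑ i ∈ Finset.range N, ((x.getD i 0 : ℤ) - y.getD i 0).natAbs := by
  unfold manhattanL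
  rw [← Finset.sum_range_add_sum_Ico _ (max_le hx hy), left_eq_add]
  refine Finset.sum_eq_zero fun i hi => ?_
  rw [Finset.mem_Ico, max_le_iff] at hi
  rw [List.getD_eq_default _ _ hi.1.1, List.getD_eq_default _ _ hi.1.2, sub_self, Int.natAbs_zero]

lemma manhattanL_triangle (x y z : List ℕ) :
    manhattanL x z ≤ manhattanL x y + manhattanL y z := by
  set N := max (max x.length y.length) z.length
  rw [manhattanL_eq_sum_range (N := N) (by omega) (by omega),
    manhattanL_eq_sum_range (N := N) (by omega) (by omega),
    manhattanL_eq_sum_range (N := N) (by omega) (by omega), ← Finset.sum_add_distrib]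
  refine Finset.sum_le_sum fun i _ => ?_
  rw [← sub_add_sub_cancel _ ((y.getD i 0 : ℕ) : ℤ)]
  exact Int.natAbs_add_le _ _

lemma leeDistL_le_manhattanL (q : ℕ) (x y : List ℕ) : leeDistL q x y ≤ manhattanL x y :=
  Finset.sum_le_sum fun _ _ => min_le_left _ _

end Manhattan

section Psi

lemma psiBlock_cons_self (a : ℤ) (t : List ℤ) :
    psiBlock a (a :: t) = t.countP (· < a) :: psiBlock a t := if_pos rfl

lemma psiBlock_cons_of_ne {a x : ℤ} (h : x ≠ a) (t : List ℤ) :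
    psiBlock a (x :: t) = psiBlock a t := if_neg h

lemma length_psiBlock (a : ℤ) (σ : List ℤ) : (psiBlock a σ).length = σ.count a := by
  induction σ with
  | nil => rfl
  | cons x t ih =>
    by_cases h : x = a
    · simp [h, psiBlock_cons_self, ih]
    · simp [h, psiBlock_cons_of_ne, ih]

lemma psiBlock_append_of_not_mem {a : ℤ} {l₁ : List ℤ} (h : a ∉ l₁) (l₂ : List ℤ) :
    psiBlock a (l₁ ++ l₂) = psiBlock a l₂ := by
  induction l₁ with
  | nil => rfl
  | cons x t ih =>
    rw [List.mem_cons, not_or] at h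
    rw [List.cons_append, psiBlock_cons_of_ne (Ne.symm h.1), ih h.2]

lemma perm_swap_middle (l₁ l₂ : List ℤ) (a b : ℤ) :
    (l₁ ++ a :: b :: l₂).Perm (l₁ ++ b :: a :: l₂) :=
  (List.Perm.swap b a l₂).append_left l₁

/-- Swapping `a` and `b` moves the smaller one across the larger one, so only the block of
`max a b` can change, and only by one in one entry. -/
lemma manhattanL_psiBlock_swap_le (c a b : ℤ) (l₁ l₂ : List ℤ) :
    manhattanL (psiBlock c (l₁ ++ a :: b :: l₂)) (psiBlock c (l₁ ++ b :: a :: l₂)) ≤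
      if c = max a b then 1 else 0 := by
  induction l₁ with
  | cons x t ih =>
    by_cases hx : x = c
    · subst hx
      simpa only [List.cons_append, psiBlock_cons_self, manhattanL_cons,
        (perm_swap_middle t l₂ a b).countP_eq, sub_self, Int.natAbs_zero, zero_add] using ih
    · simpa [psiBlock_cons_of_ne hx] using ih
  | nil =>
    simp only [List.nil_append, psiBlock]
    split_ifs <;>
      simp only [manhattanL_cons, manhattanL_self, List.countP_cons, decide_eq_true_eq,
        max_def] at * <;>
      split_ifs at * <;> omega

lemma psiVec_cons (c : ℤ) (vs σ : List ℤ) : psiVec (c :: vs) σ = psiBlock c σ ++ psiVec vs σ :=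
  rfl

lemma manhattanL_psiVec_swap_le (vs : List ℤ) (a b : ℤ) (l₁ l₂ : List ℤ) :
    manhattanL (psiVec vs (l₁ ++ a :: b :: l₂)) (psiVec vs (l₁ ++ b :: a :: l₂)) ≤
      vs.count (max a b) := by
  induction vs with
  | nil => simp [psiVec]
  | cons c vs ih =>
    have hlen : (psiBlock c (l₁ ++ a :: b :: l₂)).length =
        (psiBlock c (l₁ ++ b :: a :: l₂)).length := by
      simp only [length_psiBlock, (perm_swap_middle l₁ l₂ a b).count_eq]
    rw [psiVec_cons, psiVec_cons, manhattanL_append hlen, List.count_cons, add_comm]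
    have := manhattanL_psiBlock_swap_le c a b l₁ l₂
    simp only [beq_iff_eq]
    split_ifs at this ⊢ <;> omega

end Psi

section Kendall

lemma StepsTo.cons {n : ℕ} {σ π : List ℤ} (x : ℤ) (h : StepsTo n σ π) :
    StepsTo n (x :: σ) (x :: π) := by
  induction n generalizing σ with
  | zero => exact congrArg (x :: ·) h
  | succ n ih =>
    obtain ⟨τ, ⟨l₁, l₂, a, b, hab, rfl, rfl⟩, hτ⟩ := h
    exact ⟨x :: l₁ ++ b :: a :: l₂, ⟨x :: l₁, l₂, a, b, hab, rfl, rfl⟩, ih hτ⟩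

lemma StepsTo.trans {m n : ℕ} {σ τ π : List ℤ} (h₁ : StepsTo m σ τ) (h₂ : StepsTo n τ π) :
    StepsTo (m + n) σ π := by
  induction m generalizing σ with
  | zero => rwa [h₁, zero_add]
  | succ m ih =>
    obtain ⟨ρ, hσρ, hρτ⟩ := h₁
    rw [Nat.succ_add]
    exact ⟨ρ, hσρ, ih hρτ⟩

lemma List.Perm.exists_stepsTo {σ π : List ℤ} (h : σ.Perm π) : ∃ n, StepsTo n σ π := by
  induction h with
  | nil => exact ⟨0, rfl⟩
  | cons x _ ih =>
    obtain ⟨n, hn⟩ := ih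
    exact ⟨n, hn.cons x⟩
  | swap x y l =>
    by_cases hxy : x = y
    · exact ⟨0, by rw [hxy]; rfl⟩
    · exact ⟨1, _, ⟨[], l, y, x, Ne.symm hxy, rfl, rfl⟩, rfl⟩
  | trans _ _ ih₁ ih₂ =>
    obtain ⟨m, hm⟩ := ih₁
    obtain ⟨n, hn⟩ := ih₂
    exact ⟨m + n, hm.trans hn⟩

lemma manhattanL_psiVec_le_of_stepsTo {vs : List ℤ} (hvs : vs.Nodup) {n : ℕ}
    {σ π : List ℤ} (h : StepsTo n σ π) : manhattanL (psiVec vs σ) (psiVec vs π) ≤ n := by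
  induction n generalizing σ with
  | zero => rw [h, manhattanL_self]
  | succ n ih =>
    obtain ⟨τ, ⟨l₁, l₂, a, b, -, rfl, rfl⟩, hτ⟩ := h
    calc _ ≤ manhattanL (psiVec vs (l₁ ++ a :: b :: l₂)) (psiVec vs (l₁ ++ b :: a :: l₂)) +
          manhattanL (psiVec vs (l₁ ++ b :: a :: l₂)) (psiVec vs π) := manhattanL_triangle _ _ _
      _ ≤ 1 + n := add_le_add
          ((manhattanL_psiVec_swap_le vs a b l₁ l₂).trans (List.nodup_iff_count_le_one.1 hvs _))
          (ih hτ)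
      _ = n + 1 := add_comm 1 n

lemma manhattanL_psiVec_le_dK {vs : List ℤ} (hvs : vs.Nodup) {σ π : List ℤ}
    (h : (σ : Multiset ℤ) = π) : manhattanL (psiVec vs σ) (psiVec vs π) ≤ dK σ π :=
  manhattanL_psiVec_le_of_stepsTo hvs (Nat.sInf_mem (Multiset.coe_eq_coe.1 h).exists_stepsTo)

end Kendall

section Inverse

lemma coe_insertBlock (a : ℤ) (e : List ℕ) (σ : List ℤ) :
    (insertBlock a e σ : Multiset ℤ) = Multiset.replicate e.length a + σ := by
  induction e generalizing σ with
  | nil => simp [insertBlock]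
  | cons e es ih =>
    conv_rhs => rw [← List.take_append_drop (σ.length - e) σ]
    simp only [insertBlock, ← Multiset.coe_add, ← Multiset.cons_coe, ih, List.length_cons,
      Multiset.replicate_succ]
    rw [Multiset.add_cons, Multiset.cons_add]
    abel_nf

lemma filter_insertBlock (a : ℤ) (e : List ℕ) (σ : List ℤ) :
    (insertBlock a e σ).filter (· ≠ a) = σ.filter (· ≠ a) := by
  induction e generalizing σ with
  | nil => rfl
  | cons e es ih =>
    rw [insertBlock, List.filter_append, List.filter_cons_of_neg (by simp), ih,
      ← List.filter_append, List.take_append_drop]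

lemma psiBlock_filter_ne {a b : ℤ} (hab : a < b) (σ : List ℤ) :
    psiBlock a (σ.filter (· ≠ b)) = psiBlock a σ := by
  induction σ with
  | nil => rfl
  | cons x t ih =>
    by_cases hxb : x = b
    · rw [List.filter_cons_of_neg (by simpa using hxb), ih, hxb,
        psiBlock_cons_of_ne hab.ne']
    · rw [List.filter_cons_of_pos (by simpa using hxb)]
      by_cases hxa : x = a
      · rw [hxa, psiBlock_cons_self, psiBlock_cons_self, ih, List.countP_filter]
        congr 2
        funext y
        rcases lt_or_ge y a with hy | hy
        · simp [hy, (hy.trans hab).ne]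
        · simp [not_lt.2 hy]
      · rw [psiBlock_cons_of_ne hxa, psiBlock_cons_of_ne hxa, ih]

lemma psiBlock_insertBlock_of_lt {a b : ℤ} (hab : a < b) (e : List ℕ) (σ : List ℤ) :
    psiBlock a (insertBlock b e σ) = psiBlock a σ := by
  rw [← psiBlock_filter_ne hab, filter_insertBlock, psiBlock_filter_ne hab]

lemma psiBlock_insertBlock_self {a : ℤ} {σ : List ℤ} (hσ : ∀ x ∈ σ, x < a) {e : List ℕ}
    (he : ∀ y ∈ e, y ≤ σ.length) (hanti : e.Pairwise (· ≥ ·)) :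
    psiBlock a (insertBlock a e σ) = e := by
  induction e generalizing σ with
  | nil =>
    rw [insertBlock, ← List.length_eq_zero_iff, length_psiBlock, List.count_eq_zero]
    exact (hσ a · |>.false)
  | cons e es ih =>
    obtain ⟨hes, hanti⟩ := List.pairwise_cons.1 hanti
    set k := σ.length - e
    have hdrop : (σ.drop k).length = e := by
      have := he e List.mem_cons_self
      simp only [List.length_drop, k]
      omega
    have hsmall : ∀ x ∈ σ.drop k, x < a := fun x hx => hσ x (List.mem_of_mem_drop hx)
    have hcount : (insertBlock a es (σ.drop k)).countP (· < a) = e := by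
      rw [← Multiset.coe_countP, coe_insertBlock, Multiset.countP_add,
        Multiset.countP_eq_zero.2 fun x hx => by simp [Multiset.eq_of_mem_replicate hx],
        zero_add, Multiset.coe_countP, List.countP_eq_length.2 (by simpa using hsmall), hdrop]
    rw [insertBlock, psiBlock_append_of_not_mem (fun h => (hσ a (List.mem_of_mem_take h)).false),
      psiBlock_cons_self, hcount, ih hsmall (fun y hy => hdrop ▸ hes y hy) hanti]

variable (v : ℕ → ℤ) (B : ℕ → List ℕ)

lemma coe_unpsi (i : ℕ) :
    (unpsi v B i : Multiset ℤ) = ∑ j ∈ Finset.range i, Multiset.replicate (B j).length (v j) := by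
  induction i with
  | zero => rfl
  | succ i ih => rw [unpsi, coe_insertBlock, ih, Finset.sum_range_succ, add_comm]

lemma length_unpsi (i : ℕ) : (unpsi v B i).length = ∑ j ∈ Finset.range i, (B j).length := by
  simpa using congrArg Multiset.card (coe_unpsi v B i)

lemma exists_eq_of_mem_unpsi {i : ℕ} {x : ℤ} (hx : x ∈ unpsi v B i) : ∃ j < i, x = v j := by
  rw [← Multiset.mem_coe, coe_unpsi, Multiset.mem_sum] at hx
  obtain ⟨j, hj, hxj⟩ := hx
  exact ⟨j, Finset.mem_range.1 hj, Multiset.eq_of_mem_replicate hxj⟩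

lemma psiBlock_unpsi {i : ℕ} (hv : ∀ j k, j < k → k < i → v j < v k)
    (hB : ∀ j < i, (B j).Pairwise (· ≥ ·) ∧ ∀ y ∈ B j, y ≤ ∑ k ∈ Finset.range j, (B k).length)
    {j : ℕ} (hj : j < i) : psiBlock (v j) (unpsi v B i) = B j := by
  induction i with
  | zero => omega
  | succ i ih =>
    rw [unpsi]
    obtain rfl | hji := eq_or_lt_of_le (Nat.le_of_lt_succ hj)
    · refine psiBlock_insertBlock_self (fun x hx => ?_) (length_unpsi v B j ▸ (hB j hj).2)
        (hB j hj).1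
      obtain ⟨k, hk, rfl⟩ := exists_eq_of_mem_unpsi v B hx
      exact hv k j hk hj
    · rw [psiBlock_insertBlock_of_lt (hv j i hji (Nat.lt_succ_self i))]
      exact ih (fun j k hjk hk => hv j k hjk (hk.trans (Nat.lt_succ_self i)))
        (fun k hk => hB k (hk.trans (Nat.lt_succ_self i))) hji

end Inverse

section Blocks

def IsMonotoneBlocks (ℓ : ℕ) (m : ℕ → ℕ) (b : List (List ℕ)) : Prop :=
  b.length = ℓ - 1 ∧ ∀ i, 1 ≤ i → i < ℓ →
    (b.getD (i - 1) []).length = m i ∧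
    (b.getD (i - 1) []).IsChain (· ≥ ·) ∧
    ∀ y ∈ b.getD (i - 1) [], y ≤ ∑ j ∈ Finset.range i, m j

/-- The copies of the smallest rank `v 0` have nothing smaller to their right, so their block
is all zeros and is left out of the code vectors; `fullBlock` puts it back. -/
def fullBlock (m : ℕ → ℕ) (b : List (List ℕ)) (i : ℕ) : List ℕ :=
  (List.replicate (m 0) 0 :: b).getD i []

def blocksToPerm (ℓ : ℕ) (v : ℕ → ℤ) (m : ℕ → ℕ) (b : List (List ℕ)) : List ℤ :=
  unpsi v (fullBlock m b) ℓ

variable {ℓ : ℕ} {m : ℕ → ℕ} {b : List (List ℕ)}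

namespace IsMonotoneBlocks

lemma length_fullBlock (hb : IsMonotoneBlocks ℓ m b) {i : ℕ} (hi : i < ℓ) :
    (fullBlock m b i).length = m i := by
  cases i with
  | zero => simp [fullBlock]
  | succ i => simpa [fullBlock] using (hb.2 (i + 1) (by omega) hi).1

lemma pairwise_fullBlock (hb : IsMonotoneBlocks ℓ m b) {i : ℕ} (hi : i < ℓ) :
    (fullBlock m b i).Pairwise (· ≥ ·) := by
  cases i with
  | zero => simp [fullBlock, List.pairwise_replicate]
  | succ i => exact List.isChain_iff_pairwise.1 (hb.2 (i + 1) (by omega) hi).2.1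

lemma le_of_mem_fullBlock (hb : IsMonotoneBlocks ℓ m b) {i : ℕ} (hi : i < ℓ) :
    ∀ y ∈ fullBlock m b i, y ≤ ∑ k ∈ Finset.range i, (fullBlock m b k).length := by
  rw [Finset.sum_congr rfl fun k hk => hb.length_fullBlock ((Finset.mem_range.1 hk).trans hi)]
  cases i with
  | zero => simp [fullBlock]
  | succ i => exact (hb.2 (i + 1) (by omega) hi).2.2

lemma coe_blocksToPerm (hb : IsMonotoneBlocks ℓ m b) (v : ℕ → ℤ) :
    (blocksToPerm ℓ v m b : Multiset ℤ) =
      ∑ i ∈ Finset.range ℓ, Multiset.replicate (m i) (v i) :=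
  (coe_unpsi v _ ℓ).trans <| Finset.sum_congr rfl fun i hi => by
    rw [hb.length_fullBlock (Finset.mem_range.1 hi)]

lemma map_psiBlock_blocksToPerm (hb : IsMonotoneBlocks ℓ m b) {v : ℕ → ℤ}
    (hv : ∀ i j, i < j → j < ℓ → v i < v j) :
    (List.range (ℓ - 1)).map (fun j => psiBlock (v (j + 1)) (blocksToPerm ℓ v m b)) = b := by
  refine List.ext_getElem (by simp [hb.1]) fun j h₁ h₂ => ?_
  simp only [List.getElem_map, List.getElem_range]
  rw [blocksToPerm, psiBlock_unpsi v _ hv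
    (fun k hk => ⟨hb.pairwise_fullBlock hk, hb.le_of_mem_fullBlock hk⟩) (by simp at h₁; omega)]
  simp [fullBlock, List.getElem?_eq_getElem h₂]

lemma map_length (hb : IsMonotoneBlocks ℓ m b) :
    b.map List.length = (List.range (ℓ - 1)).map fun j => m (j + 1) := by
  refine List.ext_getElem (by simp [hb.1]) fun j h₁ h₂ => ?_
  simp only [List.getElem_map, List.getElem_range]
  simpa [fullBlock, List.getElem?_eq_getElem (by simpa using h₁ : j < b.length)] using
    hb.length_fullBlock (i := j + 1) (by simp at h₂; omega)

end IsMonotoneBlocks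

lemma flatten_injOn_isMonotoneBlocks :
    Set.InjOn List.flatten {b | IsMonotoneBlocks ℓ m b} := fun _ hb _ hb' h =>
  List.eq_iff_flatten_eq.2 ⟨h, hb.map_length.trans hb'.map_length.symm⟩

variable {v : ℕ → ℤ}

lemma blocksToPerm_injOn (hv : ∀ i j, i < j → j < ℓ → v i < v j) :
    Set.InjOn (blocksToPerm ℓ v m) {b | IsMonotoneBlocks ℓ m b} :=
  fun b hb b' hb' h => by
    rw [← IsMonotoneBlocks.map_psiBlock_blocksToPerm hb hv,
      ← IsMonotoneBlocks.map_psiBlock_blocksToPerm hb' hv, h]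

lemma psiVec_blocksToPerm (hv : ∀ i j, i < j → j < ℓ → v i < v j)
    (hb : IsMonotoneBlocks ℓ m b) :
    psiVec ((List.range (ℓ - 1)).map fun j => v (j + 1)) (blocksToPerm ℓ v m b) = b.flatten := by
  conv_rhs => rw [← hb.map_psiBlock_blocksToPerm hv]
  rw [psiVec, List.map_map]
  rfl

lemma nodup_map_range_succ (hv : ∀ i j, i < j → j < ℓ → v i < v j) :
    ((List.range (ℓ - 1)).map fun j => v (j + 1)).Nodup := by
  refine List.nodup_range.map_on fun i hi j hj h => ?_
  simp only [List.mem_range] at hi hj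
  by_contra hne
  rcases lt_or_gt_of_ne hne with hij | hji
  · exact (hv _ _ (Nat.succ_lt_succ hij) (by omega)).ne h
  · exact (hv _ _ (Nat.succ_lt_succ hji) (by omega)).ne' h

end Blocks

theorem stmt6_general (ℓ : ℕ) (v : ℕ → ℤ) (m : ℕ → ℕ)
    (hv : ∀ i j, i < j → j < ℓ → v i < v j)
    (q d : ℕ)
    (CL : Set (List ℕ))
    (hCLdist : ∀ x ∈ CL, ∀ y ∈ CL, x ≠ y → d ≤ leeDistL q x y) :
    ∃ CK : Set (List ℤ),
      (∀ σ ∈ CK,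
        (↑σ : Multiset ℤ) = ∑ i ∈ Finset.range ℓ, Multiset.replicate (m i) (v i)) ∧
      (∀ σ ∈ CK, ∀ π ∈ CK, σ ≠ π → d ≤ dK σ π) ∧
      CK.ncard = {x ∈ CL | ∃ b : List (List ℕ),
        (b.length = ℓ - 1 ∧ ∀ i, 1 ≤ i → i < ℓ →
          (b.getD (i - 1) []).length = m i ∧
          List.Chain' (· ≥ ·) (b.getD (i - 1) []) ∧
          ∀ y ∈ b.getD (i - 1) [], y ≤ ∑ j ∈ Finset.range i, m j) ∧
        b.flatten = x}.ncard := by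
  set S := {b | IsMonotoneBlocks ℓ m b} ∩ List.flatten ⁻¹' CL
  refine ⟨blocksToPerm ℓ v m '' S, ?_, ?_, ?_⟩
  · rintro _ ⟨b, ⟨hb, -⟩, rfl⟩
    exact hb.coe_blocksToPerm v
  · rintro _ ⟨b, ⟨hb, hbC⟩, rfl⟩ _ ⟨b', ⟨hb', hb'C⟩, rfl⟩ hne
    have hflat : b.flatten ≠ b'.flatten := fun h =>
      hne (by rw [flatten_injOn_isMonotoneBlocks hb hb' h])
    calc d ≤ leeDistL q b.flatten b'.flatten := hCLdist _ hbC _ hb'C hflat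
      _ ≤ manhattanL b.flatten b'.flatten := leeDistL_le_manhattanL q _ _
      _ = manhattanL (psiVec _ (blocksToPerm ℓ v m b)) (psiVec _ (blocksToPerm ℓ v m b')) := by
          rw [psiVec_blocksToPerm hv hb, psiVec_blocksToPerm hv hb']
      _ ≤ dK _ _ := manhattanL_psiVec_le_dK (nodup_map_range_succ hv)
          (by rw [hb.coe_blocksToPerm, hb'.coe_blocksToPerm])
  · calc _ = S.ncard := ((blocksToPerm_injOn hv).mono Set.inter_subset_left).ncard_image
      _ = (List.flatten '' S).ncard :=
          (flatten_injOn_isMonotoneBlocks.mono Set.inter_subset_left).ncard_image.symm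
      _ = _ := by rw [Set.image_inter_preimage, Set.inter_comm]; rfl

/-- Theorem 1. Let `M = {v 0 ^ m 0, …, v (ℓ-1) ^ m (ℓ-1)}` with distinct
ranks and positive multiplicities, `n = ∑ m i`.  If there exists a code
`C_L ⊆ (Z_q)^{n - m 0}` with `q > n_{ℓ-1}` and minimum Lee distance `d`, then there exists
a code `C_K ⊆ S(M)` with minimum Kendall τ-distance at least `d` and of size
`|C_K| = |C_L ∩ [Z]^M|`, where `[Z]^M` is viewed (via concatenation of the blocks) as a
subset of `(Z_q)^{n - m 0}`. -/
theorem stmt6 (ℓ : ℕ) (v : ℕ → ℤ) (m : ℕ → ℕ)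
    (hv : ∀ i j, i < j → j < ℓ → v i < v j)
    (hm : ∀ i, i < ℓ → 0 < m i)
    (q d : ℕ)
    (hq : (∑ j ∈ Finset.range (ℓ - 1), m j) < q)
    (CL : Set (List ℕ))
    (hCL : ∀ x ∈ CL, x.length = (∑ i ∈ Finset.range ℓ, m i) - m 0 ∧ ∀ y ∈ x, y < q)
    (hCLdist : ∀ x ∈ CL, ∀ y ∈ CL, x ≠ y → d ≤ leeDistL q x y) :
    ∃ CK : Set (List ℤ),
      (∀ σ ∈ CK,
        (↑σ : Multiset ℤ) = ∑ i ∈ Finset.range ℓ, Multiset.replicate (m i) (v i)) ∧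
      (∀ σ ∈ CK, ∀ π ∈ CK, σ ≠ π → d ≤ dK σ π) ∧
      CK.ncard = {x ∈ CL | ∃ b : List (List ℕ),
        (b.length = ℓ - 1 ∧ ∀ i, 1 ≤ i → i < ℓ →
          (b.getD (i - 1) []).length = m i ∧
          List.Chain' (· ≥ ·) (b.getD (i - 1) []) ∧
          ∀ y ∈ b.getD (i - 1) [], y ≤ ∑ j ∈ Finset.range i, m j) ∧
        b.flatten = x}.ncard :=
  stmt6_general ℓ v m hv q d CL hCLdist
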